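/- Let n ≥ 2, let P = (p_{i1 i2 i3 i4}) be a 4th order, n-dimensional stochastic tensor (the transition tensor of a third order Markov chain on S = {1,…,n}), and let Q be its reduced transition matrix. Then for all i1, i2, i3, i4 ∈ S, the 2-step transition probability satisfies p^{(2)}_{i1 i2 i3 i4} = Σ_{j1 ∈ S} (Q^2)_{(i1,j1,i2),(i2,i3,i4)}. -/

import Mathlib

open Finset

/-- A 4th order, `n`-dimensional tensor: entry `p_{i₁ i₂ i₃ i₄}` is `P i₁ i₂ i₃ i₄`. -/
abbrev Tensor4 (n : ℕ) := Fin n → Fin n → Fin n → Fin n → ℝ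

/-- `P` is a stochastic tensor. -/
def IsStochastic4 {n : ℕ} (P : Tensor4 n) : Prop :=
  (∀ i₁ i₂ i₃ i₄, 0 ≤ P i₁ i₂ i₃ i₄ ∧ P i₁ i₂ i₃ i₄ ≤ 1) ∧
  ∀ i₂ i₃ i₄, ∑ i₁ : Fin n, P i₁ i₂ i₃ i₄ = 1

/-- The product `A ⊠ B`. -/
def tmul4 {n : ℕ} (A B : Tensor4 n) : Tensor4 n :=
  fun i₁ i₂ i₃ i₄ => ∑ j : Fin n, A i₁ j i₂ i₃ * B j i₂ i₃ i₄

/-- Tensor powers: `tpow4 P k` is `P^k`, with entries the `k`-step transition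
probabilities `p^{(k)}_{i₁ i₂ i₃ i₄}`; `P^0` is the identity tensor. -/
def tpow4 {n : ℕ} (P : Tensor4 n) : ℕ → Tensor4 n
  | 0 => fun i₁ i₂ _ _ => if i₁ = i₂ then 1 else 0
  | k + 1 => tmul4 (tpow4 P k) P

/-- The reduced transition matrix `Q` of a third order chain: rows and columns are
indexed by triples, `Q (i₁,i₂,i₃) (j₁,j₂,j₃) = p_{i₁ i₂ i₃ j₃}` if `j₁ = i₂` and
`j₂ = i₃`, and `0` otherwise. -/
def reduced4 {n : ℕ} (P : Tensor4 n) :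
    Matrix (Fin n × Fin n × Fin n) (Fin n × Fin n × Fin n) ℝ :=
  fun r c => if c.1 = r.2.1 ∧ c.2.1 = r.2.2 then P r.1 r.2.1 r.2.2 c.2.2 else 0

section

variable {n : ℕ} (P : Tensor4 n)

theorem tpow4_one : tpow4 P 1 = P := by
  ext i₁ i₂ i₃ i₄
  simp [tpow4, tmul4]

theorem tpow4_two_apply (i₁ i₂ i₃ i₄ : Fin n) :
    tpow4 P 2 i₁ i₂ i₃ i₄ = ∑ j : Fin n, P i₁ j i₂ i₃ * P j i₂ i₃ i₄ := by
  rw [tpow4, tpow4_one, tmul4]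

theorem reduced4_apply_shift (i₁ i₂ i₃ j : Fin n) :
    reduced4 P (i₁, i₂, i₃) (i₂, i₃, j) = P i₁ i₂ i₃ j := by
  simp [reduced4]

theorem reduced4_apply_of_not_shift {r c : Fin n × Fin n × Fin n}
    (h : ¬(c.1 = r.2.1 ∧ c.2.1 = r.2.2)) : reduced4 P r c = 0 := if_neg h

/-- `Q` only moves a triple `(a, b, c)` to a shifted one `(b, c, d)`, so the unique path of
length two from `(i₁, i₂, i₃)` to `(i₃, i₄, i₅)` passes through `(i₂, i₃, i₄)`. -/
theorem reduced4_sq_apply_shift (i₁ i₂ i₃ i₄ i₅ : Fin n) :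
    (reduced4 P ^ 2) (i₁, i₂, i₃) (i₃, i₄, i₅) = P i₁ i₂ i₃ i₄ * P i₂ i₃ i₄ i₅ := by
  rw [sq, Matrix.mul_apply, Finset.sum_eq_single (i₂, i₃, i₄), reduced4_apply_shift,
    reduced4_apply_shift]
  · rintro ⟨c₁, c₂, c₃⟩ - hc
    by_cases hshift : c₁ = i₂ ∧ c₂ = i₃
    · obtain ⟨rfl, rfl⟩ := hshift
      rw [reduced4_apply_of_not_shift P (r := (c₁, c₂, c₃)) (by simpa [eq_comm] using hc),
        mul_zero]
    · rw [reduced4_apply_of_not_shift P hshift, zero_mul]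
  · simp

end

theorem two_step_via_reduced {n : ℕ} (P : Tensor4 n)
    (i₁ i₂ i₃ i₄ : Fin n) :
    tpow4 P 2 i₁ i₂ i₃ i₄ =
      ∑ j₁ : Fin n, (reduced4 P ^ 2) (i₁, j₁, i₂) (i₂, i₃, i₄) := by
  simp only [tpow4_two_apply, reduced4_sq_apply_shift]
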